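/- arXiv:1310.0103 — 3 statements merged into one kernel-verified Lean document; each statement's English description precedes it below -/
import Mathlib

section
/- Let c_{-1} = 0, c_0 = 1, and define c_k ∈ ℚ(q) recursively by c_k = (-q^{k-1})(q^{-1} - q)(q^{-1}[k-1] c_{k-2} + c_{k-1}) for k ≥ 1, where [n] = (q^n - q^{-n})/(q - q^{-1}). Then c_k ∈ ℤ[q, q^{-1}] for all k ≥ 0. -/
/-! Since `[n + 1] = q [n] + q^{-n}`, every quantum integer `[n]` with `n ≥ 0` is a Laurent
polynomial; the recursion then builds `c_k` from `c_{k-1}`, `c_{k-2}` and Laurent polynomials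
using only ring operations. -/

/-- The indeterminate `q`, realized as `X` in the field of rational functions `ℚ(q)`. -/
noncomputable def q0 : RatFunc ℚ := RatFunc.X

/-- The balanced quantum integer `[n] = (q^n - q^{-n})/(q - q^{-1})`. -/
noncomputable def qint (n : ℤ) : RatFunc ℚ := (q0 ^ n - q0 ^ (-n)) / (q0 - q0⁻¹)

lemma zpow_mem_closure_self_inv {K : Type*} [DivisionRing K] (x : K) (n : ℤ) : x ^ n ∈ Subring.closure {x, x⁻¹} := by
  obtain ⟨m, rfl | rfl⟩ := Int.eq_nat_or_neg n
  · rw [zpow_natCast]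
    exact pow_mem (Subring.subset_closure (Set.mem_insert x _)) m
  · rw [zpow_neg, ← inv_zpow, zpow_natCast]
    exact pow_mem (Subring.subset_closure (Set.mem_insert_of_mem x (Set.mem_singleton _))) m

lemma Int.le_induction_two_step {P : ℤ → Prop} (hm1 : P (-1)) (h0 : P 0)
    (hstep : ∀ k : ℤ, 1 ≤ k → P (k - 2) → P (k - 1) → P k) : ∀ k : ℤ, 0 ≤ k → P k := by
  suffices h : ∀ k : ℤ, 0 ≤ k → P (k - 1) ∧ P k from fun k hk => (h k hk).2
  refine Int.leInduction ⟨by simpa using hm1, h0⟩ fun k hk ih => ⟨by simpa using ih.2, ?_⟩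
  exact hstep (k + 1) (by omega) (by simpa [sub_eq_add_neg, add_assoc] using ih.1)
    (by simpa using ih.2)

lemma q0_ne_zero : q0 ≠ 0 := RatFunc.X_ne_zero

lemma q0_sub_inv_ne_zero : q0 - q0⁻¹ ≠ 0 := by
  intro h
  have hsq : q0 ^ 2 = 1 := by
    rw [sq]
    nth_rewrite 2 [sub_eq_zero.mp h]
    exact mul_inv_cancel₀ q0_ne_zero
  have hpoly : (Polynomial.X ^ 2 : Polynomial ℚ) = 1 := by
    apply RatFunc.algebraMap_injective ℚ
    simpa [q0, RatFunc.algebraMap_X] using hsq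
  simpa using congrArg (Polynomial.eval 0) hpoly

lemma qint_zero : qint 0 = 0 := by
  simp [qint]

lemma qint_add_one (n : ℤ) : qint (n + 1) = q0 * qint n + q0 ^ (-n) := by
  have hnum : q0 ^ (n + 1) - q0 ^ (-(n + 1))
      = q0 * (q0 ^ n - q0 ^ (-n)) + q0 ^ (-n) * (q0 - q0⁻¹) := by
    rw [zpow_add_one₀ q0_ne_zero, neg_add, zpow_add₀ q0_ne_zero, zpow_neg_one]
    ring
  rw [qint, qint, hnum, add_div, mul_div_assoc, mul_div_cancel_right₀ _ q0_sub_inv_ne_zero]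

lemma qint_mem_closure {n : ℤ} (hn : 0 ≤ n) : qint n ∈ Subring.closure {q0, q0⁻¹} := by
  induction n, hn using Int.leInduction with
  | base => rw [qint_zero]; exact zero_mem _
  | succ n _ ih =>
    rw [qint_add_one]
    exact add_mem (mul_mem (Subring.subset_closure (Or.inl rfl)) ih)
      (zpow_mem_closure_self_inv q0 (-n))

/-- With `c_{-1} = 0`, `c_0 = 1` and
`c_k = (-q^{k-1})(q^{-1}-q)(q^{-1}[k-1]c_{k-2} + c_{k-1})` for `k ≥ 1`,
every `c_k` for `k ≥ 0` lies in `ℤ[q, q^{-1}]`, i.e. in the subring of `ℚ(q)` generated by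
`q` and `q⁻¹`. -/
theorem stmt0 (c : ℤ → RatFunc ℚ)
    (hm1 : c (-1) = 0) (h0 : c 0 = 1)
    (hrec : ∀ k : ℤ, 1 ≤ k →
      c k = (-(q0 ^ (k - 1))) * (q0⁻¹ - q0) * (q0⁻¹ * qint (k - 1) * c (k - 2) + c (k - 1))) :
    ∀ k : ℤ, 0 ≤ k → c k ∈ Subring.closure {q0, q0⁻¹} := by
  have hq : q0 ∈ Subring.closure {q0, q0⁻¹} := Subring.subset_closure (Or.inl rfl)
  have hqi : q0⁻¹ ∈ Subring.closure {q0, q0⁻¹} := Subring.subset_closure (Or.inr rfl)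
  refine Int.le_induction_two_step (by rw [hm1]; exact zero_mem _) (by rw [h0]; exact one_mem _)
    fun k hk hk2 hk1 => ?_
  rw [hrec k hk]
  exact mul_mem (mul_mem (neg_mem (zpow_mem_closure_self_inv q0 _)) (sub_mem hqi hq))
    (add_mem (mul_mem (mul_mem hqi (qint_mem_closure (by omega))) hk2) hk1)
end

section
/- Let Λ be the free abelian group on {ε_a} with (ε_a, ε_b) = δ_{ab}, indices a ∈ {±1/2, …, ±(r+1/2)}, simple roots α_i = ε_{i-1/2} - ε_{i+1/2} for -r ≤ i ≤ r. Then there exists a function ζ: Λ → ℚ(q)^× such that ζ(μ + α_0) = -q ζ(μ) and ζ(μ + α_i) = -q^{(α_i, μ+α_i) - (α_{-i}, μ)} ζ(μ) for all μ ∈ Λ and all i with 0 < |i| ≤ r. -/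
/-!
Let `θ` be the involution `e_j ↦ e_{-j}` of `Λ`; then `α_{-i} = -θ α_i`. Put
`N(μ) = (μ, μ) + (μ, θμ) - ∑_j μ_j`, a quadratic form with polarization `2((ν, μ) + (θν, μ))`,
and `ζ(μ) = (-q)^{(μ, c)} q^{N(μ)/2}` for a weight `c` with `(α, c) = 1` for every simple root
`α`. Then `ζ(μ + α) = -q^{(α, μ) + (θα, μ) + N(α)/2 + 1} ζ(μ)` whenever `N(α)` is even, and
`N(α_0) = 0` (since `θα_0 = -α_0`) while `N(α_i) = 2` for `i ≠ 0`.
-/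

/- We index the basis `{ε_a : a ∈ J}`, `J = {±1/2, …, ±(r+1/2)}`, by the nonzero integers `j`
with `|j| ≤ r+1` via `a ↦ a + 1/2` for `a > 0` and `a ↦ a - 1/2` for `a < 0`.  Under this
relabelling, `α_i = ε_{i-1/2} - ε_{i+1/2}` becomes `e_i - e_{i+1}` for `i > 0`,
`e_{i-1} - e_i` for `i < 0`, and `α_0 = ε_{-1/2} - ε_{1/2}` becomes `e_{-1} - e_1`;
the bilinear form `(ε_a, ε_b) = δ_{ab}` becomes `(e_j, e_k) = δ_{jk}`. -/

/-- The index set for the basis of `Λ`. -/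
abbrev JIdx (r : ℕ) := {j : ℤ // j ≠ 0 ∧ -(r + 1 : ℤ) ≤ j ∧ j ≤ (r : ℤ) + 1}

/-- The basis vector `e_j` of `Λ` (and `0` for an out-of-range label). -/
noncomputable def eJ (r : ℕ) (j : ℤ) : JIdx r →₀ ℤ :=
  if h : j ≠ 0 ∧ -(r + 1 : ℤ) ≤ j ∧ j ≤ (r : ℤ) + 1 then Finsupp.single ⟨j, h⟩ 1 else 0

/-- The standard symmetric bilinear form on `Λ`. -/
def BJ (r : ℕ) (f g : JIdx r →₀ ℤ) : ℤ := f.sum fun a m => m * g a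

/-- The simple root `α_i = ε_{i-1/2} - ε_{i+1/2}`, for `-r ≤ i ≤ r`. -/
noncomputable def alphaB (r : ℕ) (i : ℤ) : JIdx r →₀ ℤ :=
  if 0 < i then eJ r i - eJ r (i + 1)
  else if i < 0 then eJ r (i - 1) - eJ r i
  else eJ r (-1) - eJ r 1

section TwistedQuad

variable {ι : Type*} [Fintype ι]

lemma dotProduct_comp_of_involutive {R : Type*} [NonUnitalNonAssocSemiring R]
    {θ : Equiv.Perm ι} (hθ : Function.Involutive θ) (u v : ι → R) : u ⬝ᵥ (v ∘ θ) = (u ∘ θ) ⬝ᵥ v := by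
  conv_lhs => rw [← hθ.symm_eq_self_of_involutive θ]
  exact dotProduct_comp_equiv_symm ..

def twistedQuad (θ : Equiv.Perm ι) (μ : ι → ℤ) : ℤ :=
  μ ⬝ᵥ μ + μ ⬝ᵥ (μ ∘ θ) - ∑ j, μ j

lemma twistedQuad_add {θ : Equiv.Perm ι} (hθ : Function.Involutive θ) (μ ν : ι → ℤ) :
    twistedQuad θ (μ + ν)
      = twistedQuad θ μ + twistedQuad θ ν + 2 * (ν ⬝ᵥ μ + (ν ∘ θ) ⬝ᵥ μ) := by
  have hcross : μ ⬝ᵥ (ν ∘ θ) = ν ⬝ᵥ (μ ∘ θ) := by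
    rw [dotProduct_comp_of_involutive hθ, dotProduct_comm]
  simp only [twistedQuad, Pi.add_comp, Pi.add_apply, Finset.sum_add_distrib, dotProduct_add,
    add_dotProduct, hcross, dotProduct_comm μ ν, dotProduct_comp_of_involutive hθ ν μ]
  ring

variable {K : Type*} [Field K]

-- Floor division; only the evenness of `twistedQuad θ ν` for the step `ν` is used in `zeta_add`.
noncomputable def zeta (q : K) (θ : Equiv.Perm ι) (c μ : ι → ℤ) : K :=
  (-q) ^ (μ ⬝ᵥ c) * q ^ (twistedQuad θ μ / 2)

lemma zeta_ne_zero {q : K} (hq : q ≠ 0) (θ : Equiv.Perm ι) (c μ : ι → ℤ) : zeta q θ c μ ≠ 0 :=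
  mul_ne_zero (zpow_ne_zero _ (neg_ne_zero.mpr hq)) (zpow_ne_zero _ hq)

lemma zeta_add {q : K} (hq : q ≠ 0) {θ : Equiv.Perm ι} (hθ : Function.Involutive θ)
    {c ν : ι → ℤ} (hc : ν ⬝ᵥ c = 1) {k : ℤ} (hk : twistedQuad θ ν = 2 * k) (μ : ι → ℤ) :
    zeta q θ c (μ + ν) = -(q ^ (ν ⬝ᵥ μ + (ν ∘ θ) ⬝ᵥ μ + k + 1)) * zeta q θ c μ := by
  have hexp : twistedQuad θ (μ + ν) / 2
      = twistedQuad θ μ / 2 + (ν ⬝ᵥ μ + (ν ∘ θ) ⬝ᵥ μ + k) := by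
    rw [twistedQuad_add hθ, hk]; omega
  rw [zeta, zeta, add_dotProduct, hc, hexp, zpow_add₀ (neg_ne_zero.mpr hq), zpow_add₀ hq,
    zpow_add_one₀ hq, zpow_one]
  ring

variable [DecidableEq ι]

lemma single_sub_single_dotProduct {R : Type*} [Ring R] (a b : ι) (v : ι → R) :
    (Pi.single a 1 - Pi.single b 1 : ι → R) ⬝ᵥ v = v a - v b := by
  rw [sub_dotProduct, single_dotProduct, single_dotProduct, one_mul, one_mul]

lemma single_sub_single_dotProduct_self {R : Type*} [Ring R] {a b : ι} (hab : a ≠ b) :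
    (Pi.single a 1 - Pi.single b 1 : ι → R) ⬝ᵥ (Pi.single a 1 - Pi.single b 1) = 2 := by
  rw [single_sub_single_dotProduct, Pi.sub_apply, Pi.sub_apply, Pi.single_eq_same,
    Pi.single_eq_same, Pi.single_eq_of_ne hab, Pi.single_eq_of_ne hab.symm]
  norm_num

lemma twistedQuad_single_sub_single {θ : Equiv.Perm ι} (hθ : Function.Involutive θ) {a b : ι}
    (hab : a ≠ b) (ha : θ a ≠ a) (hb : θ b ≠ b) :
    twistedQuad θ (Pi.single a 1 - Pi.single b 1) = if θ a = b then 0 else 2 := by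
  have hcomp : (Pi.single a 1 - Pi.single b 1 : ι → ℤ) ∘ θ
      = Pi.single (θ a) 1 - Pi.single (θ b) 1 := by
    rw [Pi.sub_comp, Pi.single_comp_equiv, Pi.single_comp_equiv,
      hθ.symm_eq_self_of_involutive]
  have hsum : ∑ j, (Pi.single a 1 - Pi.single b 1 : ι → ℤ) j = 0 := by
    simp [Finset.sum_sub_distrib]
  rw [twistedQuad, single_sub_single_dotProduct_self hab, hcomp, hsum,
    single_sub_single_dotProduct]
  by_cases h : θ a = b
  · have h' : θ b = a := by rw [← h, hθ]
    simp [h, h', hab, hab.symm]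
  · have h' : θ b ≠ a := fun h' => h (by rw [← h', hθ])
    simp [h, ha, hb, Ne.symm h, Ne.symm h']

end TwistedQuad

namespace JIdx

variable (r : ℕ)

noncomputable instance : Fintype (JIdx r) :=
  Fintype.subtype ((Finset.Icc (-(r + 1) : ℤ) ((r : ℤ) + 1)).filter (· ≠ 0))
    (by intro x; simp only [Finset.mem_filter, Finset.mem_Icc]; tauto)

def neg : Equiv.Perm (JIdx r) :=
  (Equiv.neg ℤ).subtypeEquiv fun _ => by simp only [Equiv.neg_apply]; omega

@[simp] lemma coe_neg (j : JIdx r) : (neg r j : ℤ) = -j := rfl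

lemma neg_involutive : Function.Involutive (neg r) := fun _ => Subtype.ext (neg_neg _)

lemma neg_ne_self (j : JIdx r) : neg r j ≠ j := by
  simp only [ne_eq, Subtype.ext_iff, coe_neg]; omega

-- Drops by one along `e_{-r-1}, …, e_{-1}, e_1, …, e_{r+1}`, so it pairs to `1` with every
-- simple root.
def weight (j : JIdx r) : ℤ := if 0 < (j : ℤ) then -j else -j - 1

end JIdx

lemma BJ_eq_dotProduct (r : ℕ) (f g : JIdx r →₀ ℤ) : BJ r f g = ⇑f ⬝ᵥ ⇑g :=
  Finsupp.sum_fintype _ _ fun _ => zero_mul _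

lemma eJ_comp_neg (r : ℕ) (j : ℤ) : ⇑(eJ r j) ∘ JIdx.neg r = ⇑(eJ r (-j)) := by
  unfold eJ
  by_cases hj : j ≠ 0 ∧ -(r + 1 : ℤ) ≤ j ∧ j ≤ (r : ℤ) + 1
  · have hj' : -j ≠ 0 ∧ -(r + 1 : ℤ) ≤ -j ∧ -j ≤ (r : ℤ) + 1 := by omega
    rw [dif_pos hj, dif_pos hj', Finsupp.single_eq_pi_single, Finsupp.single_eq_pi_single,
      Pi.single_comp_equiv]
    rfl
  · have hj' : ¬(-j ≠ 0 ∧ -(r + 1 : ℤ) ≤ -j ∧ -j ≤ (r : ℤ) + 1) := by omega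
    rw [dif_neg hj, dif_neg hj']
    rfl

lemma alphaB_neg (r : ℕ) (i : ℤ) : ⇑(alphaB r (-i)) = -(⇑(alphaB r i) ∘ JIdx.neg r) := by
  rcases lt_trichotomy i 0 with hi | rfl | hi
  · rw [alphaB, alphaB, if_pos (by omega), if_neg (by omega), if_pos hi]
    simp only [Finsupp.coe_sub, Pi.sub_comp, eJ_comp_neg, neg_sub]
    ring_nf
  · simp only [alphaB, lt_irrefl, if_false, neg_zero, Finsupp.coe_sub, Pi.sub_comp, eJ_comp_neg,
      neg_sub]
    norm_num
  · rw [alphaB, alphaB, if_neg (by omega), if_pos (by omega), if_pos hi]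
    simp only [Finsupp.coe_sub, Pi.sub_comp, eJ_comp_neg, neg_sub]
    ring_nf

lemma coe_eJ {r : ℕ} {j : ℤ} (h : j ≠ 0 ∧ -(r + 1 : ℤ) ≤ j ∧ j ≤ (r : ℤ) + 1) :
    ⇑(eJ r j) = Pi.single ⟨j, h⟩ 1 := by
  rw [eJ, dif_pos h, Finsupp.single_eq_pi_single]

lemma exists_alphaB_eq_single_sub_single (r : ℕ) {i : ℤ} (hi : |i| ≤ r) :
    ∃ a b : JIdx r, a ≠ b ∧ JIdx.weight r a = JIdx.weight r b + 1 ∧ (JIdx.neg r a = b ↔ i = 0) ∧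
      ⇑(alphaB r i) = Pi.single a 1 - Pi.single b 1 := by
  rw [abs_le] at hi
  rcases lt_trichotomy i 0 with hi0 | rfl | hi0
  · refine ⟨⟨i - 1, by omega⟩, ⟨i, by omega⟩, ?_, ?_, ?_, ?_⟩
    · simp [Subtype.ext_iff]
    · simp only [JIdx.weight]; split_ifs <;> omega
    · simp only [Subtype.ext_iff, JIdx.coe_neg]; omega
    · rw [alphaB, if_neg (by omega), if_pos hi0, Finsupp.coe_sub, coe_eJ, coe_eJ]
  · refine ⟨⟨-1, by omega⟩, ⟨1, by omega⟩, ?_, ?_, ?_, ?_⟩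
    · simp [Subtype.ext_iff]
    · simp only [JIdx.weight]; split_ifs <;> omega
    · simp [Subtype.ext_iff]
    · rw [alphaB, if_neg (lt_irrefl 0), if_neg (lt_irrefl 0), Finsupp.coe_sub, coe_eJ, coe_eJ]
  · refine ⟨⟨i, by omega⟩, ⟨i + 1, by omega⟩, ?_, ?_, ?_, ?_⟩
    · simp [Subtype.ext_iff]
    · simp only [JIdx.weight]; split_ifs <;> omega
    · simp only [Subtype.ext_iff, JIdx.coe_neg]; omega
    · rw [alphaB, if_pos hi0, Finsupp.coe_sub, coe_eJ, coe_eJ]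

lemma alphaB_dotProduct_weight (r : ℕ) {i : ℤ} (hi : |i| ≤ r) :
    ⇑(alphaB r i) ⬝ᵥ JIdx.weight r = 1 := by
  obtain ⟨a, b, -, hw, -, hα⟩ := exists_alphaB_eq_single_sub_single r hi
  rw [hα, single_sub_single_dotProduct, hw, add_sub_cancel_left]

lemma alphaB_dotProduct_self (r : ℕ) {i : ℤ} (hi : |i| ≤ r) :
    ⇑(alphaB r i) ⬝ᵥ ⇑(alphaB r i) = 2 := by
  obtain ⟨a, b, hab, -, -, hα⟩ := exists_alphaB_eq_single_sub_single r hi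
  rw [hα, single_sub_single_dotProduct_self hab]

lemma twistedQuad_alphaB (r : ℕ) {i : ℤ} (hi : |i| ≤ r) :
    twistedQuad (JIdx.neg r) (alphaB r i) = if i = 0 then 0 else 2 := by
  obtain ⟨a, b, hab, -, hθ, hα⟩ := exists_alphaB_eq_single_sub_single r hi
  rw [hα, twistedQuad_single_sub_single (JIdx.neg_involutive r) hab (JIdx.neg_ne_self r a)
    (JIdx.neg_ne_self r b)]
  exact if_congr hθ rfl rfl

/-- There exists a function `ζ : Λ → ℚ(q)ˣ` with `ζ(μ + α_0) = -q ζ(μ)` and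
`ζ(μ + α_i) = -q^{(α_i, μ+α_i) - (α_{-i}, μ)} ζ(μ)` for all `μ ∈ Λ` and all `0 < |i| ≤ r`. -/
theorem stmt11 (r : ℕ) :
    ∃ ζ : (JIdx r →₀ ℤ) → RatFunc ℚ,
      (∀ μ, ζ μ ≠ 0) ∧
      (∀ μ, ζ (μ + alphaB r 0) = -(RatFunc.X : RatFunc ℚ) * ζ μ) ∧
      (∀ i : ℤ, i ≠ 0 → |i| ≤ (r : ℤ) → ∀ μ,
        ζ (μ + alphaB r i)
          = -((RatFunc.X : RatFunc ℚ) ^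
                (BJ r (alphaB r i) (μ + alphaB r i) - BJ r (alphaB r (-i)) μ)) * ζ μ) := by
  have hθ := JIdx.neg_involutive r
  refine ⟨fun μ => zeta RatFunc.X (JIdx.neg r) (JIdx.weight r) μ,
    fun μ => zeta_ne_zero RatFunc.X_ne_zero _ _ _, fun μ => ?_, fun i hi hir μ => ?_⟩
  · have h0 : |(0 : ℤ)| ≤ r := by simp
    have hflip : ⇑(alphaB r 0) ∘ JIdx.neg r = -⇑(alphaB r 0) :=
      neg_eq_iff_eq_neg.mp (by rw [← alphaB_neg, neg_zero])
    simp only [Finsupp.coe_add]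
    rw [zeta_add RatFunc.X_ne_zero hθ (alphaB_dotProduct_weight r h0)
      (k := 0) (by rw [twistedQuad_alphaB r h0, if_pos rfl]; rfl), hflip, neg_dotProduct,
      add_neg_cancel, zero_add, zero_add, zpow_one]
  · simp only [Finsupp.coe_add]
    rw [zeta_add RatFunc.X_ne_zero hθ (alphaB_dotProduct_weight r hir)
      (k := 1) (by rw [twistedQuad_alphaB r hir, if_neg hi]; rfl), BJ_eq_dotProduct,
      BJ_eq_dotProduct, alphaB_neg, Finsupp.coe_add, dotProduct_add, alphaB_dotProduct_self r hir,
      neg_dotProduct]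
    congr 3
    ring
end

section
/- Let A be the associative ℚ(q)-algebra U^ı presented by generators e_i, f_i, k_i^{±1} (i = 1,…,r) and t, with relations: k_i k_i^{-1} = 1; the k_i commute; k_i e_j k_i^{-1} = q^{(α_i - α_{-i}, α_j)} e_j; k_i f_j k_i^{-1} = q^{-(α_i - α_{-i}, α_j)} f_j; k_i t = t k_i; e_i f_j - f_j e_i = δ_{ij}(k_i - k_i^{-1})/(q - q^{-1}); quantum Serre relations among the e's and among the f's; e_i t = t e_i and f_i t = t f_i for i > 1; e_1² t + t e_1² = (q+q^{-1}) e_1 t e_1; t² e_1 + e_1 t² = (q+q^{-1}) t e_1 t + e_1; f_1² t + t f_1² = (q+q^{-1}) f_1 t f_1; t² f_1 + f_1 t² = (q+q^{-1}) t f_1 t + f_1. Then there exists a ℚ-algebra involution ψ_ı of A which is antilinear in the sense ψ_ı(q) = q^{-1}, and satisfies ψ_ı(e_i) = e_i, ψ_ı(f_i) = f_i, ψ_ı(t) = t, ψ_ı(k_i) = k_i^{-1}. -/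
noncomputable section

/- The coideal algebra `U^ı` of rank `r`, presented by generators
`e_{α_i}, f_{α_i}, k_{α_i}^{±1}` (`i = 1,…,r`, recorded as `i : Fin r` with label `i+1`) and `t`,
subject to the listed relations.  Here `(α_i - α_{-i}, α_j) = 2` if `j = i`, `-1` if
`|i - j| = 1` and `0` otherwise. -/

/-- Generators of `U^ı`. -/
inductive UGen (r : ℕ)
  | e : Fin r → UGen r
  | f : Fin r → UGen r
  | k : Fin r → UGen r
  | kinv : Fin r → UGen r
  | t : UGen r

/-- The free `ℚ(q)`-algebra on the generators. -/
abbrev FA (r : ℕ) := FreeAlgebra (RatFunc ℚ) (UGen r)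

def ge (r : ℕ) (i : Fin r) : FA r := FreeAlgebra.ι _ (UGen.e i)
def gf (r : ℕ) (i : Fin r) : FA r := FreeAlgebra.ι _ (UGen.f i)
def gk (r : ℕ) (i : Fin r) : FA r := FreeAlgebra.ι _ (UGen.k i)
def gki (r : ℕ) (i : Fin r) : FA r := FreeAlgebra.ι _ (UGen.kinv i)
def gt (r : ℕ) : FA r := FreeAlgebra.ι _ UGen.t

/-- The integers `(α_i - α_{-i}, α_j)`. -/
def cc {r : ℕ} (i j : Fin r) : ℤ :=
  if i = j then 2 else if ((i : ℤ) - (j : ℤ)).natAbs = 1 then -1 else 0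

/-- The defining relations of `U^ı`. -/
inductive URel (r : ℕ) : FA r → FA r → Prop
  | kki (i : Fin r) : URel r (gk r i * gki r i) 1
  | kik (i : Fin r) : URel r (gki r i * gk r i) 1
  | kk (i j : Fin r) : URel r (gk r i * gk r j) (gk r j * gk r i)
  | ke (i j : Fin r) :
      URel r (gk r i * ge r j * gki r i) (((RatFunc.X : RatFunc ℚ) ^ cc i j) • ge r j)
  | kf (i j : Fin r) :
      URel r (gk r i * gf r j * gki r i) (((RatFunc.X : RatFunc ℚ) ^ (-cc i j)) • gf r j)
  | kt (i : Fin r) : URel r (gk r i * gt r * gki r i) (gt r)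
  | ef (i j : Fin r) :
      URel r (ge r i * gf r j - gf r j * ge r i)
        (if i = j then
          ((RatFunc.X : RatFunc ℚ) - (RatFunc.X : RatFunc ℚ)⁻¹)⁻¹ • (gk r i - gki r i)
         else 0)
  | serre_e1 (i j : Fin r) (h : ((i : ℤ) - (j : ℤ)).natAbs = 1) :
      URel r (ge r i ^ 2 * ge r j + ge r j * ge r i ^ 2)
        (((RatFunc.X : RatFunc ℚ) + (RatFunc.X : RatFunc ℚ)⁻¹) • (ge r i * ge r j * ge r i))
  | serre_e2 (i j : Fin r) (h : 1 < ((i : ℤ) - (j : ℤ)).natAbs) :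
      URel r (ge r i * ge r j) (ge r j * ge r i)
  | serre_f1 (i j : Fin r) (h : ((i : ℤ) - (j : ℤ)).natAbs = 1) :
      URel r (gf r i ^ 2 * gf r j + gf r j * gf r i ^ 2)
        (((RatFunc.X : RatFunc ℚ) + (RatFunc.X : RatFunc ℚ)⁻¹) • (gf r i * gf r j * gf r i))
  | serre_f2 (i j : Fin r) (h : 1 < ((i : ℤ) - (j : ℤ)).natAbs) :
      URel r (gf r i * gf r j) (gf r j * gf r i)
  | et (i : Fin r) (h : 0 < (i : ℕ)) : URel r (ge r i * gt r) (gt r * ge r i)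
  | ft (i : Fin r) (h : 0 < (i : ℕ)) : URel r (gf r i * gt r) (gt r * gf r i)
  | e1t (h1 : 0 < r) :
      URel r (ge r ⟨0, h1⟩ ^ 2 * gt r + gt r * ge r ⟨0, h1⟩ ^ 2)
        (((RatFunc.X : RatFunc ℚ) + (RatFunc.X : RatFunc ℚ)⁻¹) •
          (ge r ⟨0, h1⟩ * gt r * ge r ⟨0, h1⟩))
  | te1 (h1 : 0 < r) :
      URel r (gt r ^ 2 * ge r ⟨0, h1⟩ + ge r ⟨0, h1⟩ * gt r ^ 2)
        (((RatFunc.X : RatFunc ℚ) + (RatFunc.X : RatFunc ℚ)⁻¹) •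
          (gt r * ge r ⟨0, h1⟩ * gt r) + ge r ⟨0, h1⟩)
  | f1t (h1 : 0 < r) :
      URel r (gf r ⟨0, h1⟩ ^ 2 * gt r + gt r * gf r ⟨0, h1⟩ ^ 2)
        (((RatFunc.X : RatFunc ℚ) + (RatFunc.X : RatFunc ℚ)⁻¹) •
          (gf r ⟨0, h1⟩ * gt r * gf r ⟨0, h1⟩))
  | tf1 (h1 : 0 < r) :
      URel r (gt r ^ 2 * gf r ⟨0, h1⟩ + gf r ⟨0, h1⟩ * gt r ^ 2)
        (((RatFunc.X : RatFunc ℚ) + (RatFunc.X : RatFunc ℚ)⁻¹) •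
          (gt r * gf r ⟨0, h1⟩ * gt r) + gf r ⟨0, h1⟩)

/-- The coideal algebra `U^ı`, as the quotient of the free algebra by the relations. -/
abbrev UAlg (r : ℕ) := RingQuot (URel r)

def uE (r : ℕ) (i : Fin r) : UAlg r := RingQuot.mkAlgHom (RatFunc ℚ) (URel r) (ge r i)
def uF (r : ℕ) (i : Fin r) : UAlg r := RingQuot.mkAlgHom (RatFunc ℚ) (URel r) (gf r i)
def uK (r : ℕ) (i : Fin r) : UAlg r := RingQuot.mkAlgHom (RatFunc ℚ) (URel r) (gk r i)
def uKi (r : ℕ) (i : Fin r) : UAlg r := RingQuot.mkAlgHom (RatFunc ℚ) (URel r) (gki r i)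
def uT (r : ℕ) : UAlg r := RingQuot.mkAlgHom (RatFunc ℚ) (URel r) (gt r)

/-! The bar map is induced by the `σ`-semilinear ring homomorphism on the free algebra that
fixes `e_i, f_i, t` and swaps `k_i ↔ k_i⁻¹`. It descends to `U^ı` because each defining relation
is carried to a consequence of the relations: the `k`-relations are inverted by conjugating with
the unit `k_i`, the `e f` relation picks up the sign of `σ ((q - q⁻¹)⁻¹) = -(q - q⁻¹)⁻¹`, and all
the others only involve `q + q⁻¹`, which `σ` fixes. It is an involution because `σ` is one and
its square fixes the generators. -/

namespace FreeAlgebra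

variable {R A X : Type*} [CommSemiring R] [Semiring A] [Algebra R A]

def semilinearLift (σ : R →+* R) (g : X → A) : FreeAlgebra R X →+* A :=
  letI : Algebra R A :=
    ((algebraMap R A).comp σ).toAlgebra' fun c x => Algebra.commutes (σ c) x
  (FreeAlgebra.lift R g).toRingHom

@[simp]
theorem semilinearLift_ι (σ : R →+* R) (g : X → A) (x : X) :
    semilinearLift σ g (ι R x) = g x :=
  letI : Algebra R A :=
    ((algebraMap R A).comp σ).toAlgebra' fun c x => Algebra.commutes (σ c) x
  lift_ι_apply g x

@[simp]
theorem semilinearLift_algebraMap (σ : R →+* R) (g : X → A) (c : R) :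
    semilinearLift σ g (algebraMap R (FreeAlgebra R X) c) = algebraMap R A (σ c) :=
  letI : Algebra R A :=
    ((algebraMap R A).comp σ).toAlgebra' fun c x => Algebra.commutes (σ c) x
  (FreeAlgebra.lift R g).commutes c

@[simp]
theorem semilinearLift_smul (σ : R →+* R) (g : X → A) (c : R) (x : FreeAlgebra R X) :
    semilinearLift σ g (c • x) = σ c • semilinearLift σ g x := by
  rw [Algebra.smul_def, map_mul, semilinearLift_algebraMap, Algebra.smul_def]

end FreeAlgebra

theorem RingQuot.involutive_of_freeAlgebra {R X : Type*} [CommSemiring R]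
    {rel : FreeAlgebra R X → FreeAlgebra R X → Prop} {σ : R →+* R} (hσ : Function.Involutive σ)
    (ψ : RingQuot rel →+* RingQuot rel)
    (hψ : ∀ c, ψ (algebraMap R _ c) = algebraMap R _ (σ c))
    (hgen : ∀ x,
      ψ (ψ (mkAlgHom R rel (FreeAlgebra.ι R x))) = mkAlgHom R rel (FreeAlgebra.ι R x)) :
    Function.Involutive ψ := by
  let ψψ : RingQuot rel →ₐ[R] RingQuot rel :=
    { ψ.comp ψ with commutes' := fun c => by simp [hψ, hσ c] }
  have : ψψ = AlgHom.id R _ :=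
    ringQuot_ext' R _ _ (FreeAlgebra.hom_ext (funext hgen))
  exact fun x => AlgHom.congr_fun this x

theorem RatFunc.involutive_of_map_X_eq_inv {σ : RatFunc ℚ →+* RatFunc ℚ}
    (hσ : σ X = X⁻¹) : Function.Involutive σ := by
  have : σ.comp σ = RingHom.id _ := by
    refine IsLocalization.ringHom_ext (nonZeroDivisors (Polynomial ℚ))
      (Polynomial.ringHom_ext' (RingHom.ext_rat _ _) ?_)
    simp [hσ]
  exact fun c => RingHom.congr_fun this c

theorem Units.inv_mul_mul_eq_of_mul_mul_inv_eq {M : Type*} [Monoid M] (u : Mˣ) {a b : M}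
    (h : ↑u * a * ↑u⁻¹ = b) : ↑u⁻¹ * b * ↑u = a := by
  simp [← h, mul_assoc]

theorem Units.inv_mul_mul_eq_inv_smul {K A : Type*} [Semifield K] [Semiring A] [Algebra K A]
    (u : Aˣ) {a : A} {c : K} (hc : c ≠ 0) (h : ↑u * a * ↑u⁻¹ = c • a) :
    ↑u⁻¹ * a * ↑u = c⁻¹ • a := by
  have := u.inv_mul_mul_eq_of_mul_mul_inv_eq h
  rw [mul_smul_comm, smul_mul_assoc] at this
  exact (eq_inv_smul_iff₀ hc).2 this

section Bar

variable (r : ℕ)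

local notation "q" => (RatFunc.X : RatFunc ℚ)

@[simp] theorem mkAlgHom_ge (i : Fin r) :
    RingQuot.mkAlgHom (RatFunc ℚ) (URel r) (ge r i) = uE r i := rfl
@[simp] theorem mkAlgHom_gf (i : Fin r) :
    RingQuot.mkAlgHom (RatFunc ℚ) (URel r) (gf r i) = uF r i := rfl
@[simp] theorem mkAlgHom_gk (i : Fin r) :
    RingQuot.mkAlgHom (RatFunc ℚ) (URel r) (gk r i) = uK r i := rfl
@[simp] theorem mkAlgHom_gki (i : Fin r) :
    RingQuot.mkAlgHom (RatFunc ℚ) (URel r) (gki r i) = uKi r i := rfl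
@[simp] theorem mkAlgHom_gt :
    RingQuot.mkAlgHom (RatFunc ℚ) (URel r) (gt r) = uT r := rfl

def uKUnit (i : Fin r) : (UAlg r)ˣ where
  val := uK r i
  inv := uKi r i
  val_inv := by simpa using RingQuot.mkAlgHom_rel (RatFunc ℚ) (URel.kki i)
  inv_val := by simpa using RingQuot.mkAlgHom_rel (RatFunc ℚ) (URel.kik i)

@[simp] theorem coe_uKUnit (i : Fin r) : (uKUnit r i : UAlg r) = uK r i := rfl
@[simp] theorem coe_uKUnit_inv (i : Fin r) : ((uKUnit r i)⁻¹ : (UAlg r)ˣ) = uKi r i := rfl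

theorem uKi_commute (i j : Fin r) : Commute (uKi r i) (uKi r j) := by
  have : Commute (uK r i) (uK r j) := by
    simpa [commute_iff_eq] using RingQuot.mkAlgHom_rel (RatFunc ℚ) (URel.kk i j)
  exact (Commute.units_inv_left (u := uKUnit r i) this).units_inv_right (u := uKUnit r j)

def barGen : UGen r → UAlg r
  | .e i => uE r i
  | .f i => uF r i
  | .k i => uKi r i
  | .kinv i => uK r i
  | .t => uT r

variable {r} (σ : RatFunc ℚ →+* RatFunc ℚ)

abbrev barLift : FA r →+* UAlg r := FreeAlgebra.semilinearLift σ (barGen r)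

@[simp] theorem barLift_ge (i : Fin r) : barLift σ (ge r i) = uE r i := by simp [ge, barGen]
@[simp] theorem barLift_gf (i : Fin r) : barLift σ (gf r i) = uF r i := by simp [gf, barGen]
@[simp] theorem barLift_gk (i : Fin r) : barLift σ (gk r i) = uKi r i := by simp [gk, barGen]
@[simp] theorem barLift_gki (i : Fin r) : barLift σ (gki r i) = uK r i := by simp [gki, barGen]
@[simp] theorem barLift_gt : barLift σ (gt r) = uT r := by simp [gt, barGen]

variable {σ} (hσ : σ q = q⁻¹)
include hσ

theorem barLift_rel ⦃x y : FA r⦄ (h : URel r x y) : barLift σ x = barLift σ y := by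
  have hσ_add : σ (q + q⁻¹) = q + q⁻¹ := by simp [hσ, add_comm]
  cases h with
  | kki i => simpa using RingQuot.mkAlgHom_rel (RatFunc ℚ) (URel.kik i)
  | kik i => simpa using RingQuot.mkAlgHom_rel (RatFunc ℚ) (URel.kki i)
  | kk i j => simpa using (uKi_commute r i j).eq
  | ke i j =>
    have := RingQuot.mkAlgHom_rel (RatFunc ℚ) (URel.ke i j)
    simp only [map_mul, map_smul, mkAlgHom_gk, mkAlgHom_ge, mkAlgHom_gki] at this
    simpa [hσ] using (uKUnit r i).inv_mul_mul_eq_inv_smul (zpow_ne_zero _ RatFunc.X_ne_zero) this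
  | kf i j =>
    have := RingQuot.mkAlgHom_rel (RatFunc ℚ) (URel.kf i j)
    simp only [map_mul, map_smul, mkAlgHom_gk, mkAlgHom_gf, mkAlgHom_gki] at this
    simpa [hσ] using (uKUnit r i).inv_mul_mul_eq_inv_smul (zpow_ne_zero _ RatFunc.X_ne_zero) this
  | kt i =>
    have := RingQuot.mkAlgHom_rel (RatFunc ℚ) (URel.kt i)
    simp only [map_mul, mkAlgHom_gk, mkAlgHom_gt, mkAlgHom_gki] at this
    simpa using (uKUnit r i).inv_mul_mul_eq_of_mul_mul_inv_eq this
  | ef i j =>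
    have hσ_inv : σ (q - q⁻¹)⁻¹ = -(q - q⁻¹)⁻¹ := by
      rw [map_inv₀, map_sub, hσ, map_inv₀, hσ, inv_inv, ← neg_sub, inv_neg]
    have := RingQuot.mkAlgHom_rel (RatFunc ℚ) (URel.ef i j)
    split_ifs at this ⊢ with hij
    · simp only [map_sub, map_mul, map_smul, mkAlgHom_ge, mkAlgHom_gf, mkAlgHom_gk,
        mkAlgHom_gki] at this
      simp only [map_sub, map_mul, barLift_ge, barLift_gf, barLift_gk, barLift_gki,
        FreeAlgebra.semilinearLift_smul, hσ_inv, this]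
      simp only [smul_sub, neg_smul, sub_neg_eq_add]
      abel
    · simpa using this
  | serre_e1 i j h =>
    simpa [hσ_add] using RingQuot.mkAlgHom_rel (RatFunc ℚ) (URel.serre_e1 i j h)
  | serre_e2 i j h => simpa using RingQuot.mkAlgHom_rel (RatFunc ℚ) (URel.serre_e2 i j h)
  | serre_f1 i j h =>
    simpa [hσ_add] using RingQuot.mkAlgHom_rel (RatFunc ℚ) (URel.serre_f1 i j h)
  | serre_f2 i j h => simpa using RingQuot.mkAlgHom_rel (RatFunc ℚ) (URel.serre_f2 i j h)
  | et i h => simpa using RingQuot.mkAlgHom_rel (RatFunc ℚ) (URel.et i h)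
  | ft i h => simpa using RingQuot.mkAlgHom_rel (RatFunc ℚ) (URel.ft i h)
  | e1t h1 => simpa [hσ_add] using RingQuot.mkAlgHom_rel (RatFunc ℚ) (URel.e1t h1)
  | te1 h1 => simpa [hσ_add] using RingQuot.mkAlgHom_rel (RatFunc ℚ) (URel.te1 h1)
  | f1t h1 => simpa [hσ_add] using RingQuot.mkAlgHom_rel (RatFunc ℚ) (URel.f1t h1)
  | tf1 h1 => simpa [hσ_add] using RingQuot.mkAlgHom_rel (RatFunc ℚ) (URel.tf1 h1)

variable (r) in
def bar : UAlg r →+* UAlg r := RingQuot.lift ⟨barLift σ, barLift_rel hσ⟩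

theorem bar_mkAlgHom (x : FA r) :
    bar r hσ (RingQuot.mkAlgHom (RatFunc ℚ) (URel r) x) = barLift σ x := by
  rw [← RingHom.coe_coe (RingQuot.mkAlgHom _ _), RingQuot.mkAlgHom_coe]
  exact RingQuot.lift_mkRingHom_apply _ (barLift_rel hσ) x

theorem bar_mkAlgHom_ι (g : UGen r) :
    bar r hσ (RingQuot.mkAlgHom (RatFunc ℚ) (URel r) (FreeAlgebra.ι _ g)) = barGen r g := by
  rw [bar_mkAlgHom, FreeAlgebra.semilinearLift_ι]

theorem bar_algebraMap (c : RatFunc ℚ) :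
    bar r hσ (algebraMap (RatFunc ℚ) (UAlg r) c) = algebraMap (RatFunc ℚ) (UAlg r) (σ c) := by
  rw [← (RingQuot.mkAlgHom (RatFunc ℚ) (URel r)).commutes c, bar_mkAlgHom,
    FreeAlgebra.semilinearLift_algebraMap]

variable (r) in
theorem bar_involutive : Function.Involutive (bar r hσ) := by
  refine RingQuot.involutive_of_freeAlgebra (RatFunc.involutive_of_map_X_eq_inv hσ) _
    (bar_algebraMap hσ) fun g => ?_
  rw [bar_mkAlgHom_ι]
  cases g with
  | e i => exact bar_mkAlgHom_ι hσ (.e i)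
  | f i => exact bar_mkAlgHom_ι hσ (.f i)
  | k i => exact bar_mkAlgHom_ι hσ (.kinv i)
  | kinv i => exact bar_mkAlgHom_ι hσ (.k i)
  | t => exact bar_mkAlgHom_ι hσ .t

end Bar

/-- `U^ı` admits a bar involution:  a ring endomorphism `ψ_ı`, antilinear over the field
automorphism `σ` of `ℚ(q)` determined by `σ(q) = q⁻¹`, which is an involution and fixes
`e_{α_i}`, `f_{α_i}`, `t`, and sends `k_{α_i} ↦ k_{α_i}⁻¹`. -/
theorem stmt18 (r : ℕ)
    (σ : RatFunc ℚ →+* RatFunc ℚ) (hσ : σ RatFunc.X = (RatFunc.X : RatFunc ℚ)⁻¹) :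
    ∃ ψ : UAlg r →+* UAlg r,
      (∀ c : RatFunc ℚ,
        ψ (algebraMap (RatFunc ℚ) (UAlg r) c) = algebraMap (RatFunc ℚ) (UAlg r) (σ c)) ∧
      (∀ x, ψ (ψ x) = x) ∧
      (∀ i, ψ (uE r i) = uE r i) ∧
      (∀ i, ψ (uF r i) = uF r i) ∧
      ψ (uT r) = uT r ∧
      (∀ i, ψ (uK r i) = uKi r i) ∧
      (∀ i, ψ (uKi r i) = uK r i) :=
  ⟨bar r hσ, bar_algebraMap hσ, bar_involutive r hσ, fun i => bar_mkAlgHom_ι hσ (.e i),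
    fun i => bar_mkAlgHom_ι hσ (.f i), bar_mkAlgHom_ι hσ .t, fun i => bar_mkAlgHom_ι hσ (.k i),
    fun i => bar_mkAlgHom_ι hσ (.kinv i)⟩

end
end
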